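/- Let α > −1 and r ∈ [0,1). Then (1/2π)∫₀^{2π} |(1 − r e^{it})^{−α} − 1| dt ≤ |(1 − r)^{−α} − 1|, where (1 − r e^{it})^{−α} is the principal complex power. -/

import Mathlib

open Complex MeasureTheory Real Set

noncomputable section

/-- Wirtinger derivative `∂f = (f_x - i f_y)/2` of a function `f : ℂ → ℂ`,
viewed as a real-differentiable map. -/
def wdz (f : ℂ → ℂ) (z : ℂ) : ℂ :=
  (fderiv ℝ f z 1 - Complex.I * fderiv ℝ f z Complex.I) / 2

/-- Wirtinger derivative `∂̄f = (f_x + i f_y)/2`. -/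
def wdzbar (f : ℂ → ℂ) (z : ℂ) : ℂ :=
  (fderiv ℝ f z 1 + Complex.I * fderiv ℝ f z Complex.I) / 2

/-- The `α`-harmonic Poisson kernel
`P_α(z) = (1-|z|²)^{α+1} / ((1-z)(1-z̄)^{α+1})` (principal powers). -/
def poissonKernel' (α : ℝ) (z : ℂ) : ℂ :=
  (((1 - ‖z‖ ^ 2) ^ (α + 1) : ℝ) : ℂ) /
    ((1 - z) * (1 - (starRingEnd ℂ) z) ^ ((α : ℂ) + 1))

/-- The `α`-harmonic extension `P_α[F](z) = (1/2π) ∫₀^{2π} P_α(z e^{-it}) F(t) dt`. -/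
def poissonExt (α : ℝ) (F : ℝ → ℂ) (z : ℂ) : ℂ :=
  (1 / (2 * Real.pi) : ℂ) *
    ∫ t in (0:ℝ)..(2 * Real.pi), poissonKernel' α (z * Complex.exp (-Complex.I * t)) * F t

/-- The angular derivative `∂_θ f(z) = i (z ∂f(z) - z̄ ∂̄f(z))`. -/
def angularDeriv (f : ℂ → ℂ) (z : ℂ) : ℂ :=
  Complex.I * (z * wdz f z - (starRingEnd ℂ) z * wdzbar f z)

/-- The integral mean `M_p(r,g) = ((1/2π) ∫₀^{2π} |g(r e^{iθ})|^p dθ)^{1/p}`. -/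
def Mp (p : ℝ) (r : ℝ) (g : ℂ → ℂ) : ℝ :=
  ((1 / (2 * Real.pi)) *
      ∫ θ in (0:ℝ)..(2 * Real.pi),
        ‖g ((r : ℂ) * Complex.exp (Complex.I * θ))‖ ^ p) ^ (1 / p)

/-- The boundary `L^p` norm `‖G‖_{L^p} = ((1/2π) ∫₀^{2π} |G(t)|^p dt)^{1/p}`. -/
def lpNormBdry (p : ℝ) (G : ℝ → ℂ) : ℝ :=
  ((1 / (2 * Real.pi)) * ∫ t in (0:ℝ)..(2 * Real.pi), ‖G t‖ ^ p) ^ (1 / p)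

/-- The constant `c_α = Γ(α+1)/Γ(α/2+1)²`. -/
def cAlpha (α : ℝ) : ℝ := Real.Gamma (α + 1) / (Real.Gamma (α / 2 + 1)) ^ 2

/-- `I_α(r) = (1/2π) ∫₀^{2π} (1-r²)^α / |1 - r e^{it}|^{α+1} dt`. -/
def Ialpha (α r : ℝ) : ℝ :=
  (1 / (2 * Real.pi)) *
    ∫ t in (0:ℝ)..(2 * Real.pi),
      (1 - r ^ 2) ^ α / (‖1 - (r : ℂ) * Complex.exp (Complex.I * t)‖) ^ (α + 1)

/-- `g_α(z) = ((1-|z|²)/(1-z̄))^α` (principal complex power). -/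
def gAlpha (α : ℝ) (z : ℂ) : ℂ :=
  ((((1 - ‖z‖ ^ 2 : ℝ)) : ℂ) / (1 - (starRingEnd ℂ) z)) ^ (α : ℂ)

end

/-! Pointwise, `‖(1 - w) ^ β - 1‖ ≤ |(1 - r) ^ β - 1|` whenever `‖w‖ ≤ r < 1` and `β = -α ≤ 1`, so
the mean over the circle is bounded by this maximum. The pointwise bound compares derivatives along the
segment `s ↦ s w`: the derivative of `(1 - s w) ^ β` has norm `|β| ‖w‖ ‖1 - s w‖ ^ (β - 1)`, and since
`‖1 - s w‖ ≥ 1 - s r` and `β - 1 ≤ 0` this is at most `|β| r (1 - s r) ^ (β - 1)`, the derivative of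
the real function `s ↦ (1 - s r) ^ β` up to sign. -/

lemma one_sub_le_re_one_sub {z : ℂ} {ρ : ℝ} (hz : ‖z‖ ≤ ρ) : 1 - ρ ≤ (1 - z).re := by
  rw [sub_re, one_re]
  linarith [(re_le_norm z).trans hz]

/-- The sign `c = ±1` makes `s ↦ c ((1 - s r) ^ β - 1)` increasing, so that it fences
`s ↦ (1 - s w) ^ β - 1` on `[0, 1]`. -/
lemma norm_one_sub_cpow_sub_one_le_mul {β r c : ℝ} {w : ℂ} (hβ : β ≤ 1) (hc : c * β = -|β|)
    (hw : ‖w‖ ≤ r) (hr : r < 1) :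
    ‖(1 - w) ^ (β : ℂ) - 1‖ ≤ c * ((1 - r) ^ β - 1) := by
  have hpos : ∀ s ∈ Icc (0:ℝ) 1, 0 < 1 - s * r := fun s hs => by
    nlinarith [norm_nonneg w, hs.1, hs.2]
  have hre : ∀ s ∈ Icc (0:ℝ) 1, 1 - s * r ≤ (1 - (s:ℂ) * w).re := fun s hs =>
    one_sub_le_re_one_sub <| by
      rw [norm_mul, norm_real, Real.norm_of_nonneg hs.1]
      exact mul_le_mul_of_nonneg_left hw hs.1
  have hf : ∀ s ∈ Icc (0:ℝ) 1, HasDerivAt (fun s : ℝ => (1 - (s:ℂ) * w) ^ (β:ℂ) - 1)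
      (β * (1 - s * w) ^ ((β:ℂ) - 1) * -w) s := fun s hs => by
    have hlin : HasDerivAt (fun z : ℂ => 1 - z * w) (-w) s := by
      simpa using ((hasDerivAt_id (s:ℂ)).mul_const w).const_sub 1
    exact ((hlin.cpow_const (Or.inl ((hpos s hs).trans_le (hre s hs)))).sub_const 1).comp_ofReal
  have hB : ∀ s ∈ Icc (0:ℝ) 1, HasDerivAt (fun s : ℝ => c * ((1 - s * r) ^ β - 1))
      (c * (-r * β * (1 - s * r) ^ (β - 1))) s := fun s hs => by
    have hlin : HasDerivAt (fun s : ℝ => 1 - s * r) (-r) s := by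
      simpa using ((hasDerivAt_id s).mul_const r).const_sub 1
    exact ((hlin.rpow_const (Or.inl (hpos s hs).ne')).sub_const 1).const_mul c
  have bound : ∀ s ∈ Ico (0:ℝ) 1,
      ‖(β : ℂ) * (1 - s * w) ^ ((β:ℂ) - 1) * -w‖ ≤ c * (-r * β * (1 - s * r) ^ (β - 1)) := by
    intro s hs
    replace hs := Ico_subset_Icc_self hs
    have hnorm : ‖(1 - (s:ℂ) * w) ^ ((β:ℂ) - 1)‖ ≤ (1 - s * r) ^ (β - 1) := by
      rw [← ofReal_one, ← ofReal_sub, norm_cpow_real]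
      exact Real.rpow_le_rpow_of_nonpos (hpos s hs) ((hre s hs).trans (re_le_norm _))
        (by linarith)
    calc ‖(β : ℂ) * (1 - s * w) ^ ((β:ℂ) - 1) * -w‖
        = |β| * ‖(1 - (s:ℂ) * w) ^ ((β:ℂ) - 1)‖ * ‖w‖ := by
          rw [norm_mul, norm_mul, norm_neg, norm_real, Real.norm_eq_abs]
      _ ≤ |β| * (1 - s * r) ^ (β - 1) * r := by
          have := Real.rpow_nonneg (hpos s hs).le (β - 1)
          gcongr
      _ = c * (-r * β * (1 - s * r) ^ (β - 1)) := by
          linear_combination (1 - s * r) ^ (β - 1) * r * hc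
  have key := image_norm_le_of_norm_deriv_right_le_deriv_boundary' (a := 0) (b := 1)
    (fun s hs => (hf s hs).continuousAt.continuousWithinAt)
    (fun s hs => (hf s (Ico_subset_Icc_self hs)).hasDerivWithinAt) (by simp)
    (fun s hs => (hB s hs).continuousAt.continuousWithinAt)
    (fun s hs => (hB s (Ico_subset_Icc_self hs)).hasDerivWithinAt) bound
    (right_mem_Icc.2 zero_le_one)
  simpa using key

lemma norm_one_sub_cpow_sub_one_le {β r : ℝ} {w : ℂ} (hβ : β ≤ 1) (hw : ‖w‖ ≤ r) (hr : r < 1) :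
    ‖(1 - w) ^ (β : ℂ) - 1‖ ≤ |(1 - r) ^ β - 1| := by
  rcases le_total β 0 with hβ0 | hβ0
  · calc _ ≤ 1 * ((1 - r) ^ β - 1) :=
          norm_one_sub_cpow_sub_one_le_mul hβ (by rw [abs_of_nonpos hβ0]; ring) hw hr
      _ ≤ _ := by rw [one_mul]; exact le_abs_self _
  · calc _ ≤ -1 * ((1 - r) ^ β - 1) :=
          norm_one_sub_cpow_sub_one_le_mul hβ (by rw [abs_of_nonneg hβ0]; ring) hw hr
      _ ≤ _ := by rw [neg_one_mul]; exact neg_le_abs _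

/-- For `α > -1` and `0 ≤ r < 1`,
`(1/2π)∫₀^{2π} |(1-re^{it})^{-α} - 1| dt ≤ |(1-r)^{-α} - 1|`. -/
theorem integral_abs_cpow_sub_one_le (α : ℝ) (hα : -1 < α) (r : ℝ) (hr : r ∈ Set.Ico (0:ℝ) 1) :
    (1 / (2 * Real.pi)) *
        ∫ t in (0:ℝ)..(2 * Real.pi),
          ‖(1 - (r : ℂ) * Complex.exp (Complex.I * t)) ^ (-(α : ℂ)) - 1‖ ≤
      |(1 - r) ^ (-α) - 1| := by
  have hpointwise : ∀ t : ℝ,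
      ‖‖(1 - (r : ℂ) * exp (I * t)) ^ (-(α : ℂ)) - 1‖‖ ≤ |(1 - r) ^ (-α) - 1| := fun t => by
    rw [norm_norm, ← ofReal_neg]
    refine norm_one_sub_cpow_sub_one_le (by linarith) ?_ hr.2
    rw [norm_mul, norm_exp_I_mul_ofReal, norm_real, Real.norm_of_nonneg hr.1, mul_one]
  have hπ : 0 < 2 * π := by positivity
  calc (1 / (2 * π)) * ∫ t in (0:ℝ)..(2 * π), ‖(1 - (r : ℂ) * exp (I * t)) ^ (-(α : ℂ)) - 1‖
      ≤ (1 / (2 * π)) * (|(1 - r) ^ (-α) - 1| * |2 * π - 0|) := by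
        gcongr
        exact (le_abs_self _).trans
          (intervalIntegral.norm_integral_le_of_norm_le_const fun t _ => hpointwise t)
    _ = |(1 - r) ^ (-α) - 1| := by
        rw [sub_zero, abs_of_pos hπ]
        field_simp
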